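/- arXiv:2003.09929 — 3 statements merged into one kernel-verified Lean document; each statement's English description precedes it below -/
import Mathlib

section
/- Let G be a vertex-minimal planar graph without 4-cycles and 5-cycles having no (F_3,F_4)-partition, fixed with a plane embedding. Then there is no 6-vertex lying on three 3-faces, one of which is terrible. -/
open SimpleGraph Finset

/-- `A` (playing the role of `A₃`) together with `S \ A` (playing the role of `A₄`)
is an `(𝓕₃,𝓕₄)`-partition of the subgraph of `G` induced on the vertex set `S`:
`A` induces a forest of maximum degree at most `3` and `S \ A` induces a forest of
maximum degree at most `4`. -/
def FFPartOn {V : Type*} [Fintype V] [DecidableEq V] (G : SimpleGraph V)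
    [DecidableRel G.Adj] (S A : Finset V) : Prop :=
  A ⊆ S ∧
  (∀ v ∈ A, (G.neighborFinset v ∩ A).card ≤ 3) ∧
  (∀ v ∈ S \ A, (G.neighborFinset v ∩ (S \ A)).card ≤ 4) ∧
  (G.induce (↑A : Set V)).IsAcyclic ∧
  (G.induce (↑(S \ A) : Set V)).IsAcyclic

/-- `G` is a vertex-minimal graph admitting no `(𝓕₃,𝓕₄)`-partition: `G` itself has no
`(𝓕₃,𝓕₄)`-partition, but for every vertex `v` the graph `G - v` has one. -/
def MinimalNoFF {V : Type*} [Fintype V] [DecidableEq V] (G : SimpleGraph V)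
    [DecidableRel G.Adj] : Prop :=
  (¬ ∃ A : Finset V, FFPartOn G Finset.univ A) ∧
  (∀ v : V, ∃ A : Finset V, FFPartOn G (Finset.univ \ {v}) A)

/-- The 3-face `vxy` is terrible: `x` and `y` are 3-vertices, and among their
pendent neighbors (the neighbors off the triangle) at least one has degree at most 4. -/
def Terrible {V : Type*} [Fintype V] [DecidableEq V] (G : SimpleGraph V)
    [DecidableRel G.Adj] (v x y : V) : Prop :=
  G.Adj v x ∧ G.Adj v y ∧ G.Adj x y ∧ G.degree x = 3 ∧ G.degree y = 3 ∧
  ∃ x' y' : V, G.Adj x x' ∧ x' ≠ v ∧ x' ≠ y ∧ G.Adj y y' ∧ y' ≠ v ∧ y' ≠ x ∧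
    (G.degree x' ≤ 4 ∨ G.degree y' ≤ 4)


namespace NoSixAux

open SimpleGraph Finset

variable {V : Type*} [DecidableEq V] {G : SimpleGraph V}

omit [DecidableEq V] in
lemma cycle_two_nbrs {x : V} (c : G.Walk x x) (hc : c.IsCycle) :
    ∃ a b : V, a ≠ b ∧ G.Adj x a ∧ G.Adj x b ∧ a ∈ c.support ∧ b ∈ c.support := by
  have h3 := hc.three_le_length
  have hnil : ¬c.Nil := by
    rw [Walk.nil_iff_length_eq]; omega
  obtain ⟨y, hxy, q, rfl⟩ := Walk.not_nil_iff.mp hnil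
  have hrev : ¬(Walk.cons hxy q).reverse.Nil := by
    rw [Walk.nil_iff_length_eq, Walk.length_reverse]; omega
  obtain ⟨z, hxz, q', hq'⟩ := Walk.not_nil_iff.mp hrev
  have hzsup : z ∈ (Walk.cons hxy q).support := by
    have : z ∈ (Walk.cons hxy q).reverse.support := by
      rw [hq']; simp
    rwa [Walk.support_reverse, List.mem_reverse] at this
  have hedges : s(x,y) :: q.edges = q'.edges.reverse ++ [s(x,z)] := by
    have h1 : (Walk.cons hxy q).reverse.edges = s(x,z) :: q'.edges := by rw [hq']; rfl
    rw [Walk.edges_reverse] at h1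
    have := congrArg List.reverse h1
    simpa using this
  have hne : s(x,y) ≠ s(x,z) := by
    cases h' : q'.edges.reverse with
    | nil =>
      rw [h'] at hedges
      simp at hedges
      have : q.length = 0 := by
        exact Walk.nil_iff_length_eq.mp hedges.2
      simp [this] at h3
    | cons e t =>
      rw [h'] at hedges
      simp at hedges
      have hmem : s(x,z) ∈ q.edges := by rw [hedges.2]; simp
      have htr : ((Walk.cons hxy q).edges).Nodup := hc.1.1.edges_nodup
      have : s(x,y) ∉ q.edges := by
        simpa [Walk.edges_cons] using (List.nodup_cons.mp (by simpa using htr)).1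
      intro h; rw [h] at this; exact this hmem
  refine ⟨y, z, fun h => hne (by rw [h]), hxy, hxz, by simp, hzsup⟩

omit [DecidableEq V] in
lemma liftWalk_aux {s : Set V} {a b : V} (p : G.Walk a b) (hp : ∀ u ∈ p.support, u ∈ s) :
    a ∈ s := hp a p.start_mem_support

/-- Lift a walk whose support lies in `s` to the induced subgraph. -/
def liftWalk {s : Set V} : ∀ {a b : V} (p : G.Walk a b) (_ : ∀ u ∈ p.support, u ∈ s),
    (G.induce s).Walk ⟨a, by simp_all⟩ ⟨b, by simp_all [Walk.end_mem_support]⟩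
  | _, _, .nil, hp => .nil
  | a, b, .cons h p, hp => .cons (by exact h)
      (liftWalk p (fun u hu => hp u (by simp [hu])))

omit [DecidableEq V] in
lemma liftWalk_map {s : Set V} {a b : V} (p : G.Walk a b) (hp : ∀ u ∈ p.support, u ∈ s) :
    (liftWalk p hp).map (Embedding.induce s).toHom = p := by
  induction p with
  | nil => rfl
  | cons h p ih => exact congrArg (Walk.cons h) (ih _)

omit [DecidableEq V] in
lemma no_cycle_of_induce_acyclic {s : Set V} (h : (G.induce s).IsAcyclic)
    {w : V} (c : G.Walk w w) (hc : c.IsCycle) (hs : ∀ u ∈ c.support, u ∈ s) : False := by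
  have hcyc : (liftWalk c hs).IsCycle := by
    rw [← Walk.map_isCycle_iff_of_injective (p := liftWalk c hs)
      (f := (Embedding.induce s).toHom) (Subtype.val_injective), liftWalk_map c hs]
    exact hc
  exact h _ hcyc

omit [DecidableEq V] in
lemma induce_acyclic_of_no_cycle {s : Set V}
    (h : ∀ (w : V) (c : G.Walk w w), c.IsCycle → ¬ (∀ u ∈ c.support, u ∈ s)) :
    (G.induce s).IsAcyclic := by
  intro w c hc
  have hmap : (c.map (Embedding.induce s).toHom).IsCycle := hc.map Subtype.val_injective
  refine h _ _ hmap ?_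
  intro u hu
  rw [Walk.support_map, List.mem_map] at hu
  obtain ⟨a, -, rfl⟩ := hu
  exact a.2

omit [DecidableEq V] in
lemma acyclic_induce_mono {s t : Set V} (hst : s ⊆ t) (ht : (G.induce t).IsAcyclic) :
    (G.induce s).IsAcyclic :=
  induce_acyclic_of_no_cycle fun _ c hc hs =>
    no_cycle_of_induce_acyclic ht c hc (fun u hu => hst (hs u hu))

omit [DecidableEq V] in
lemma tri_free {s : Set V} (hac : (G.induce s).IsAcyclic) {a b c : V}
    (hab : G.Adj a b) (hbc : G.Adj b c) (hca : G.Adj c a)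
    (ha : a ∈ s) (hb : b ∈ s) (hc : c ∈ s) : False := by
  refine no_cycle_of_induce_acyclic hac
    (.cons hab (.cons hbc (.cons hca .nil))) ?_ ?_
  · constructor
    · constructor
      · simp [Walk.isTrail_def, hab.ne, hbc.ne, hca.ne, hab.ne', hbc.ne', hca.ne',
          Sym2.eq_iff]
      · simp
    · simp [hab.ne, hbc.ne, hca.ne, hab.ne', hbc.ne', hca.ne']
  · intro u hu
    simp at hu
    rcases hu with h | h | h | h <;> simp [h, ha, hb, hc]

lemma acyclic_insert {x : V} {s : Set V} (hs : (G.induce s).IsAcyclic)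
    (h1 : ∀ a b : V, G.Adj x a → G.Adj x b → a ∈ s → b ∈ s → a = b) :
    (G.induce (insert x s)).IsAcyclic := by
  apply induce_acyclic_of_no_cycle
  intro w c hc hsup
  by_cases hxc : x ∈ c.support
  · have hc' : (c.rotate x hxc).IsCycle := hc.rotate hxc
    have hsup' : ∀ u ∈ (c.rotate x hxc).support, u ∈ insert x s := by
      intro u hu
      rw [Walk.support_eq_cons] at hu
      rcases List.mem_cons.mp hu with rfl | hu
      · exact Set.mem_insert _ _
      · have : u ∈ c.support.tail :=
          ((Walk.support_rotate c x hxc).mem_iff).mp hu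
        exact hsup u (List.mem_of_mem_tail this)
    obtain ⟨a, b, hab, hxa, hxb, ha, hb⟩ := cycle_two_nbrs (c.rotate x hxc) hc'
    have ha' : a ∈ s := by
      rcases hsup' a ha with h | h
      · exact absurd h hxa.ne'
      · exact h
    have hb' : b ∈ s := by
      rcases hsup' b hb with h | h
      · exact absurd h hxb.ne'
      · exact h
    exact hab (h1 a b hxa hxb ha' hb')
  · exact no_cycle_of_induce_acyclic hs c hc (fun u hu => by
      rcases hsup u hu with h | h
      · exact absurd (h ▸ hu) hxc
      · exact h)

omit [DecidableEq V] in
lemma cyc4' {a b c d : V} (hab : G.Adj a b) (hbc : G.Adj b c) (hcd : G.Adj c d)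
    (hda : G.Adj d a) (hac : a ≠ c) (hbd : b ≠ d)
    (h4 : ∀ (w : V) (p : G.Walk w w), p.IsCycle → p.length ≠ 4) : False := by
  refine h4 a (.cons hab (.cons hbc (.cons hcd (.cons hda .nil)))) ?_ rfl
  constructor
  · constructor
    · simp [Walk.isTrail_def, hab.ne, hbc.ne, hcd.ne, hda.ne, hab.ne', hbc.ne', hcd.ne',
        hda.ne', hac, hbd, hac.symm, hbd.symm, Sym2.eq_iff]
    · simp
  · simp [hab.ne, hbc.ne, hcd.ne, hda.ne, hab.ne', hbc.ne', hcd.ne', hda.ne', hac, hbd,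
      hac.symm, hbd.symm]

lemma triangle_pair {v a b c d : V}
    (h4 : ∀ (w : V) (p : G.Walk w w), p.IsCycle → p.length ≠ 4)
    (hva : G.Adj v a) (hvb : G.Adj v b) (hab : G.Adj a b)
    (hvc : G.Adj v c) (hvd : G.Adj v d) (hcd : G.Adj c d)
    (hne : ({a, b} : Finset V) ≠ {c, d}) :
    a ≠ c ∧ a ≠ d ∧ b ≠ c ∧ b ≠ d := by
  have hac : a ≠ c := by
    rintro rfl
    have hbd : b ≠ d := by rintro rfl; exact hne rfl
    exact cyc4' hvb hab.symm hcd hvd.symm hva.ne hbd h4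
  have had : a ≠ d := by
    rintro rfl
    have hbc : b ≠ c := by rintro rfl; exact hne (by rw [Finset.pair_comm])
    exact cyc4' hvb hab.symm hcd.symm hvc.symm hva.ne hbc h4
  have hbc : b ≠ c := by
    rintro rfl
    exact cyc4' hva hab hcd hvd.symm hvb.ne had h4
  have hbd : b ≠ d := by
    rintro rfl
    exact cyc4' hva hab hcd.symm hvc.symm hvb.ne hac h4
  exact ⟨hac, had, hbc, hbd⟩

end NoSixAux

section NoSixAux2

open SimpleGraph Finset NoSixAux

variable {V : Type*} [Fintype V] [DecidableEq V] {G : SimpleGraph V} [DecidableRel G.Adj]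

lemma addA {x : V} {A : Finset V} (hA : FFPartOn G (univ \ {x}) A)
    (h1 : (G.neighborFinset x ∩ A).card ≤ 1)
    (h2 : ∀ u ∈ G.neighborFinset x ∩ A, (G.neighborFinset u ∩ A).card ≤ 2) :
    FFPartOn G univ (insert x A) := by
  obtain ⟨hsub, hdA, hdB, hacA, hacB⟩ := hA
  have hxA : x ∉ A := fun h => by simpa using hsub h
  have hBeq : univ \ insert x A = (univ \ {x}) \ A := by
    ext u; simp
  refine ⟨subset_univ _, ?_, ?_, ?_, ?_⟩
  · intro w hw
    rcases Finset.mem_insert.mp hw with rfl | hw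
    · have : G.neighborFinset w ∩ insert w A = G.neighborFinset w ∩ A := by
        ext u; simp only [mem_inter, mem_insert, mem_neighborFinset]
        constructor
        · rintro ⟨hadj, rfl | hu⟩
          · exact absurd hadj (G.loopless.irrefl _)
          · exact ⟨hadj, hu⟩
        · tauto
      rw [this]; omega
    · by_cases hwx : G.Adj w x
      · have hw2 : w ∈ G.neighborFinset x ∩ A := by
          simp [mem_neighborFinset, hwx.symm, hw]
        have hsubs : G.neighborFinset w ∩ insert x A ⊆ insert x (G.neighborFinset w ∩ A) := by
          intro u hu
          simp only [mem_inter, mem_insert] at hu ⊢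
          tauto
        calc (G.neighborFinset w ∩ insert x A).card
            ≤ (insert x (G.neighborFinset w ∩ A)).card := card_le_card hsubs
          _ ≤ (G.neighborFinset w ∩ A).card + 1 := card_insert_le _ _
          _ ≤ 3 := by have := h2 w hw2; omega
      · have : G.neighborFinset w ∩ insert x A = G.neighborFinset w ∩ A := by
          ext u; simp only [mem_inter, mem_insert, mem_neighborFinset]
          constructor
          · rintro ⟨hadj, rfl | hu⟩
            · exact absurd hadj hwx
            · exact ⟨hadj, hu⟩
          · tauto
        rw [this]; exact hdA w hw
  · rw [hBeq]; exact hdB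
  · rw [coe_insert]
    refine acyclic_insert hacA ?_
    intro a b hxa hxb ha hb
    have ha' : a ∈ G.neighborFinset x ∩ A := by
      simp only [mem_inter, mem_neighborFinset]; exact ⟨hxa, by exact_mod_cast ha⟩
    have hb' : b ∈ G.neighborFinset x ∩ A := by
      simp only [mem_inter, mem_neighborFinset]; exact ⟨hxb, by exact_mod_cast hb⟩
    exact Finset.card_le_one.mp h1 a ha' b hb'
  · rw [hBeq]; exact hacB

lemma addB {x : V} {A : Finset V} (hA : FFPartOn G (univ \ {x}) A)
    (h1 : (G.neighborFinset x ∩ ((univ \ {x}) \ A)).card ≤ 1)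
    (h2 : ∀ u ∈ G.neighborFinset x ∩ ((univ \ {x}) \ A),
      (G.neighborFinset u ∩ ((univ \ {x}) \ A)).card ≤ 3) :
    FFPartOn G univ A := by
  obtain ⟨hsub, hdA, hdB, hacA, hacB⟩ := hA
  have hxA : x ∉ A := fun h => by simpa using hsub h
  set B := (univ \ {x}) \ A with hBdef
  have hBeq : univ \ A = insert x B := by
    ext u
    simp only [hBdef, mem_sdiff, mem_univ, true_and, mem_insert, mem_singleton]
    by_cases hux : u = x
    · subst hux; simp [hxA]
    · simp [hux]
  refine ⟨subset_univ _, hdA, ?_, hacA, ?_⟩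
  · intro w hw
    rw [hBeq] at hw ⊢
    rcases Finset.mem_insert.mp hw with rfl | hw
    · have : G.neighborFinset w ∩ insert w B = G.neighborFinset w ∩ B := by
        ext u; simp only [mem_inter, mem_insert, mem_neighborFinset]
        constructor
        · rintro ⟨hadj, rfl | hu⟩
          · exact absurd hadj (G.loopless.irrefl _)
          · exact ⟨hadj, hu⟩
        · tauto
      rw [this]; omega
    · by_cases hwx : G.Adj w x
      · have hw2 : w ∈ G.neighborFinset x ∩ B := by
          simp only [mem_inter, mem_neighborFinset]; exact ⟨hwx.symm, hw⟩
        have hsubs : G.neighborFinset w ∩ insert x B ⊆ insert x (G.neighborFinset w ∩ B) := by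
          intro u hu
          simp only [mem_inter, mem_insert] at hu ⊢
          tauto
        calc (G.neighborFinset w ∩ insert x B).card
            ≤ (insert x (G.neighborFinset w ∩ B)).card := card_le_card hsubs
          _ ≤ (G.neighborFinset w ∩ B).card + 1 := card_insert_le _ _
          _ ≤ 4 := by have := h2 w hw2; omega
      · have : G.neighborFinset w ∩ insert x B = G.neighborFinset w ∩ B := by
          ext u; simp only [mem_inter, mem_insert, mem_neighborFinset]
          constructor
          · rintro ⟨hadj, rfl | hu⟩
            · exact absurd hadj hwx
            · exact ⟨hadj, hu⟩
          · tauto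
        rw [this]; exact hdB w hw
  · rw [hBeq, coe_insert]
    refine acyclic_insert hacB ?_
    intro a b hxa hxb ha hb
    have ha' : a ∈ G.neighborFinset x ∩ B := by
      simp only [mem_inter, mem_neighborFinset]; exact ⟨hxa, by exact_mod_cast ha⟩
    have hb' : b ∈ G.neighborFinset x ∩ B := by
      simp only [mem_inter, mem_neighborFinset]; exact ⟨hxb, by exact_mod_cast hb⟩
    exact Finset.card_le_one.mp h1 a ha' b hb'

lemma moveOut {x' : V} {S A : Finset V} (hA : FFPartOn G S A) (hx' : x' ∈ A)
    (h0 : ∀ u ∈ G.neighborFinset x', u ∉ S \ A) :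
    FFPartOn G S (A.erase x') := by
  obtain ⟨hsub, hdA, hdB, hacA, hacB⟩ := hA
  have hx'S : x' ∈ S := hsub hx'
  have hBeq : S \ A.erase x' = insert x' (S \ A) := by
    ext u
    simp only [mem_sdiff, mem_erase, mem_insert]
    constructor
    · rintro ⟨huS, hu⟩
      by_cases h : u = x'
      · exact Or.inl h
      · exact Or.inr ⟨huS, fun hA' => hu ⟨h, hA'⟩⟩
    · rintro (rfl | ⟨huS, hu⟩)
      · exact ⟨hx'S, fun h => h.1 rfl⟩
      · exact ⟨huS, fun h => hu h.2⟩
  refine ⟨(erase_subset _ _).trans hsub, ?_, ?_, ?_, ?_⟩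
  · intro w hw
    calc (G.neighborFinset w ∩ A.erase x').card
        ≤ (G.neighborFinset w ∩ A).card :=
          card_le_card (inter_subset_inter (Finset.Subset.refl _) (erase_subset _ _))
      _ ≤ 3 := hdA w (mem_of_mem_erase hw)
  · intro w hw
    rw [hBeq] at hw ⊢
    rcases Finset.mem_insert.mp hw with rfl | hwB
    · have : G.neighborFinset w ∩ insert w (S \ A) = ∅ := by
        ext u
        simp only [mem_inter, mem_insert, mem_neighborFinset, notMem_empty, iff_false, not_and]
        rintro hadj (rfl | hu)
        · exact absurd hadj (G.loopless.irrefl _)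
        · exact absurd hu (h0 u (by simpa [mem_neighborFinset] using hadj))
      rw [this]; simp
    · have : G.neighborFinset w ∩ insert x' (S \ A) = G.neighborFinset w ∩ (S \ A) := by
        ext u; simp only [mem_inter, mem_insert, mem_neighborFinset]
        constructor
        · rintro ⟨hadj, hu | hu⟩
          · exact absurd hwB (h0 w (by rw [mem_neighborFinset]; exact (hu ▸ hadj).symm))
          · exact ⟨hadj, hu⟩
        · tauto
      rw [this]; exact hdB w hwB
  · exact acyclic_induce_mono (by exact_mod_cast coe_subset.mpr (erase_subset _ _)) hacA
  · rw [hBeq, coe_insert]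
    refine acyclic_insert hacB ?_
    intro a b hxa _ ha _
    exact absurd (by exact_mod_cast ha) (h0 a (by simpa [mem_neighborFinset] using hxa))


lemma key {v x q x' y' p₂ q₂ p₃ q₃ : V}
    (hmin : MinimalNoFF G)
    (hNx : G.neighborFinset x = {v, q, x'})
    (hNq : G.neighborFinset q = {v, x, y'})
    (hNv : G.neighborFinset v = {x, q, p₂, q₂, p₃, q₃})
    (hx'4 : G.degree x' ≤ 4)
    (h23 : G.Adj p₂ q₂) (h33 : G.Adj p₃ q₃) : False := by
  have hxv : G.Adj x v := by rw [← mem_neighborFinset, hNx]; simp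
  have hxq : G.Adj x q := by rw [← mem_neighborFinset, hNx]; simp
  have hxx' : G.Adj x x' := by rw [← mem_neighborFinset, hNx]; simp
  have hvp₂ : G.Adj v p₂ := by rw [← mem_neighborFinset, hNv]; simp
  have hvq₂ : G.Adj v q₂ := by rw [← mem_neighborFinset, hNv]; simp
  have hvp₃ : G.Adj v p₃ := by rw [← mem_neighborFinset, hNv]; simp
  have hvq₃ : G.Adj v q₃ := by rw [← mem_neighborFinset, hNv]; simp
  obtain ⟨A, hA⟩ := hmin.2 x
  set S : Finset V := univ \ {x} with hSdef
  have hmemS : ∀ u : V, u ≠ x → u ∈ S := by intro u hu; simp [hSdef, hu]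
  have hvS : v ∈ S := hmemS v hxv.ne'
  have hqS : q ∈ S := hmemS q hxq.ne'
  have hx'S : x' ∈ S := hmemS x' hxx'.ne'
  have hxA : x ∉ A := fun h => by simpa [hSdef] using hA.1 h
  have hxB : x ∉ S \ A := by simp [hSdef]
  -- the saturation bound for v
  have count_v : ∀ C : Finset V, x ∉ C → q ∉ C → v ∈ C →
      (G.induce (↑C : Set V)).IsAcyclic → (G.neighborFinset v ∩ C).card ≤ 2 := by
    intro C hxC hqC hvC hac
    have pair : ∀ a b : V, G.Adj v a → G.Adj v b → G.Adj a b →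
        (({a, b} : Finset V) ∩ C).card ≤ 1 := by
      intro a b hva hvb hab
      by_cases hin : a ∈ C ∧ b ∈ C
      · exact absurd (tri_free hac hva hab hvb.symm (by exact_mod_cast hvC)
          (by exact_mod_cast hin.1) (by exact_mod_cast hin.2)) not_false
      · rcases not_and_or.mp hin with h | h
        · calc (({a, b} : Finset V) ∩ C).card ≤ ({b} : Finset V).card := by
                apply card_le_card; intro u hu
                simp only [mem_inter, mem_insert, mem_singleton] at hu ⊢
                rcases hu with ⟨rfl | rfl, huC⟩
                · exact absurd huC h
                · rfl
            _ = 1 := card_singleton _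
        · calc (({a, b} : Finset V) ∩ C).card ≤ ({a} : Finset V).card := by
                apply card_le_card; intro u hu
                simp only [mem_inter, mem_insert, mem_singleton] at hu ⊢
                rcases hu with ⟨rfl | rfl, huC⟩
                · rfl
                · exact absurd huC h
            _ = 1 := card_singleton _
    have hsub : G.neighborFinset v ∩ C ⊆
        (({p₂, q₂} : Finset V) ∩ C) ∪ (({p₃, q₃} : Finset V) ∩ C) := by
      intro u hu
      rw [mem_inter, hNv] at hu
      obtain ⟨hu1, hu2⟩ := hu
      simp only [mem_insert, mem_singleton] at hu1
      rcases hu1 with rfl | rfl | rfl | rfl | rfl | rfl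
      · exact absurd hu2 hxC
      · exact absurd hu2 hqC
      · simp [hu2]
      · simp [hu2]
      · simp [hu2]
      · simp [hu2]
    calc (G.neighborFinset v ∩ C).card
        ≤ ((({p₂, q₂} : Finset V) ∩ C) ∪ (({p₃, q₃} : Finset V) ∩ C)).card :=
          card_le_card hsub
      _ ≤ (({p₂, q₂} : Finset V) ∩ C).card + (({p₃, q₃} : Finset V) ∩ C).card :=
          card_union_le _ _
      _ ≤ 2 := by
          have := pair p₂ q₂ hvp₂ hvq₂ h23
          have := pair p₃ q₃ hvp₃ hvq₃ h33
          omega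
  -- bound for q
  have count_q : ∀ C : Finset V, x ∉ C → v ∉ C →
      (G.neighborFinset q ∩ C).card ≤ 1 := by
    intro C hxC hvC
    calc (G.neighborFinset q ∩ C).card ≤ ({y'} : Finset V).card := by
          apply card_le_card; intro u hu
          rw [mem_inter, hNq] at hu
          obtain ⟨hu1, hu2⟩ := hu
          simp only [mem_insert, mem_singleton] at hu1 ⊢
          rcases hu1 with rfl | rfl | rfl
          · exact absurd hu2 hvC
          · exact absurd hu2 hxC
          · rfl
      _ = 1 := card_singleton _
  -- bound for x'
  have hx'erase : (G.neighborFinset x').card ≤ 4 := by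
    rwa [card_neighborFinset_eq_degree]
  have hxmem : x ∈ G.neighborFinset x' := by rw [mem_neighborFinset]; exact hxx'.symm
  have count_x' : ∀ C : Finset V, x ∉ C → (G.neighborFinset x' ∩ C).card ≤ 3 := by
    intro C hxC
    have hsub : G.neighborFinset x' ∩ C ⊆ (G.neighborFinset x').erase x := by
      intro u hu
      rw [mem_inter] at hu
      rw [mem_erase]
      exact ⟨fun h => hxC (h ▸ hu.2), hu.1⟩
    calc (G.neighborFinset x' ∩ C).card ≤ ((G.neighborFinset x').erase x).card :=
          card_le_card hsub
      _ = (G.neighborFinset x').card - 1 := card_erase_of_mem hxmem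
      _ ≤ 3 := by omega
  -- case analysis
  by_cases hvA : v ∈ A <;> by_cases hqA : q ∈ A <;> by_cases hx'A : x' ∈ A
  · -- (A,A,A): B-side empty
    refine hmin.1 ⟨A, addB hA ?_ ?_⟩
    · have : G.neighborFinset x ∩ (S \ A) = ∅ := by
        ext u
        rw [mem_inter, hNx]
        simp only [mem_insert, mem_singleton, notMem_empty, iff_false, mem_sdiff]
        rintro ⟨h1, _, h3⟩
        rcases h1 with rfl | rfl | rfl
        exacts [h3 hvA, h3 hqA, h3 hx'A]
      rw [this]; simp
    · intro u hu
      exfalso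
      rw [mem_inter, hNx] at hu
      obtain ⟨hu1, hu2⟩ := hu
      rw [mem_sdiff] at hu2
      simp only [mem_insert, mem_singleton] at hu1
      rcases hu1 with rfl | rfl | rfl <;> [exact hu2.2 hvA; exact hu2.2 hqA; exact hu2.2 hx'A]
  · -- (A,A,B): x' alone in B
    refine hmin.1 ⟨A, addB hA ?_ ?_⟩
    · calc (G.neighborFinset x ∩ (S \ A)).card ≤ ({x'} : Finset V).card := by
            apply card_le_card; intro u hu
            rw [mem_inter, hNx] at hu
            obtain ⟨hu1, hu2⟩ := hu
            rw [mem_sdiff] at hu2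
            simp only [mem_insert, mem_singleton] at hu1 ⊢
            rcases hu1 with rfl | rfl | rfl <;>
              [exact absurd hvA hu2.2; exact absurd hqA hu2.2; rfl]
        _ = 1 := card_singleton _
    · intro u hu
      rw [mem_inter, hNx] at hu
      obtain ⟨hu1, hu2⟩ := hu
      rw [mem_sdiff] at hu2
      simp only [mem_insert, mem_singleton] at hu1
      rcases hu1 with rfl | rfl | rfl
      · exact absurd hvA hu2.2
      · exact absurd hqA hu2.2
      · exact count_x' _ hxB
  · -- (A,B,A): q alone in B
    refine hmin.1 ⟨A, addB hA ?_ ?_⟩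
    · calc (G.neighborFinset x ∩ (S \ A)).card ≤ ({q} : Finset V).card := by
            apply card_le_card; intro u hu
            rw [mem_inter, hNx] at hu
            obtain ⟨hu1, hu2⟩ := hu
            rw [mem_sdiff] at hu2
            simp only [mem_insert, mem_singleton] at hu1 ⊢
            rcases hu1 with rfl | rfl | rfl <;>
              [exact absurd hvA hu2.2; rfl; exact absurd hx'A hu2.2]
        _ = 1 := card_singleton _
    · intro u hu
      rw [mem_inter, hNx] at hu
      obtain ⟨hu1, hu2⟩ := hu
      rw [mem_sdiff] at hu2
      simp only [mem_insert, mem_singleton] at hu1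
      rcases hu1 with rfl | rfl | rfl
      · exact absurd hvA hu2.2
      · exact le_trans (count_q _ hxB (by simp [hvA])) (by norm_num)
      · exact absurd hx'A hu2.2
  · -- (A,B,B): v alone in A
    refine hmin.1 ⟨_, addA hA ?_ ?_⟩
    · calc (G.neighborFinset x ∩ A).card ≤ ({v} : Finset V).card := by
            apply card_le_card; intro u hu
            rw [mem_inter, hNx] at hu
            obtain ⟨hu1, hu2⟩ := hu
            simp only [mem_insert, mem_singleton] at hu1 ⊢
            rcases hu1 with rfl | rfl | rfl <;>
              [rfl; exact absurd hu2 hqA; exact absurd hu2 hx'A]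
        _ = 1 := card_singleton _
    · intro u hu
      rw [mem_inter, hNx] at hu
      obtain ⟨hu1, hu2⟩ := hu
      simp only [mem_insert, mem_singleton] at hu1
      rcases hu1 with rfl | rfl | rfl
      · exact count_v A hxA hqA hvA hA.2.2.2.1
      · exact absurd hu2 hqA
      · exact absurd hu2 hx'A
  · -- (B,A,A): v alone in B
    refine hmin.1 ⟨A, addB hA ?_ ?_⟩
    · calc (G.neighborFinset x ∩ (S \ A)).card ≤ ({v} : Finset V).card := by
            apply card_le_card; intro u hu
            rw [mem_inter, hNx] at hu
            obtain ⟨hu1, hu2⟩ := hu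
            rw [mem_sdiff] at hu2
            simp only [mem_insert, mem_singleton] at hu1 ⊢
            rcases hu1 with rfl | rfl | rfl <;>
              [rfl; exact absurd hqA hu2.2; exact absurd hx'A hu2.2]
        _ = 1 := card_singleton _
    · intro u hu
      rw [mem_inter, hNx] at hu
      obtain ⟨hu1, hu2⟩ := hu
      rw [mem_sdiff] at hu2
      simp only [mem_insert, mem_singleton] at hu1
      rcases hu1 with rfl | rfl | rfl
      · exact le_trans (count_v (S \ A) hxB (by simp [hqA]) (mem_sdiff.mpr ⟨hvS, hu2.2⟩) hA.2.2.2.2)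
          (by norm_num)
      · exact absurd hqA hu2.2
      · exact absurd hx'A hu2.2
  · -- (B,A,B): q alone in A
    refine hmin.1 ⟨_, addA hA ?_ ?_⟩
    · calc (G.neighborFinset x ∩ A).card ≤ ({q} : Finset V).card := by
            apply card_le_card; intro u hu
            rw [mem_inter, hNx] at hu
            obtain ⟨hu1, hu2⟩ := hu
            simp only [mem_insert, mem_singleton] at hu1 ⊢
            rcases hu1 with rfl | rfl | rfl <;>
              [exact absurd hu2 hvA; rfl; exact absurd hu2 hx'A]
        _ = 1 := card_singleton _
    · intro u hu
      rw [mem_inter, hNx] at hu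
      obtain ⟨hu1, hu2⟩ := hu
      simp only [mem_insert, mem_singleton] at hu1
      rcases hu1 with rfl | rfl | rfl
      · exact absurd hu2 hvA
      · exact le_trans (count_q A hxA hvA) (by norm_num)
      · exact absurd hu2 hx'A
  · -- (B,B,A): x' alone in A
    by_cases hcard : (G.neighborFinset x' ∩ A).card ≤ 2
    · refine hmin.1 ⟨_, addA hA ?_ ?_⟩
      · calc (G.neighborFinset x ∩ A).card ≤ ({x'} : Finset V).card := by
              apply card_le_card; intro u hu
              rw [mem_inter, hNx] at hu
              obtain ⟨hu1, hu2⟩ := hu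
              simp only [mem_insert, mem_singleton] at hu1 ⊢
              rcases hu1 with rfl | rfl | rfl <;>
                [exact absurd hu2 hvA; exact absurd hu2 hqA; rfl]
          _ = 1 := card_singleton _
      · intro u hu
        rw [mem_inter, hNx] at hu
        obtain ⟨hu1, hu2⟩ := hu
        simp only [mem_insert, mem_singleton] at hu1
        rcases hu1 with rfl | rfl | rfl
        · exact absurd hu2 hvA
        · exact absurd hu2 hqA
        · exact hcard
    · push_neg at hcard
      have hBempty : ∀ u ∈ G.neighborFinset x', u ∉ S \ A := by
        intro u hu huB
        rw [mem_sdiff] at huB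
        have hins : insert u (G.neighborFinset x' ∩ A) ⊆ (G.neighborFinset x').erase x := by
          intro w hw
          rcases Finset.mem_insert.mp hw with rfl | hw
          · rw [mem_erase]
            exact ⟨fun h => by simp [hSdef, h] at huB, hu⟩
          · rw [mem_inter] at hw
            rw [mem_erase]
            exact ⟨fun h => hxA (h ▸ hw.2), hw.1⟩
        have h1 : (insert u (G.neighborFinset x' ∩ A)).card =
            (G.neighborFinset x' ∩ A).card + 1 :=
          card_insert_of_notMem (fun h => huB.2 (mem_inter.mp h).2)
        have h2 : ((G.neighborFinset x').erase x).card = (G.neighborFinset x').card - 1 :=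
          card_erase_of_mem hxmem
        have h3 := card_le_card hins
        omega
      have hA' := moveOut hA hx'A hBempty
      refine hmin.1 ⟨_, addA hA' ?_ ?_⟩
      · have : G.neighborFinset x ∩ A.erase x' = ∅ := by
          ext u
          rw [mem_inter, hNx]
          simp only [mem_insert, mem_singleton, notMem_empty, iff_false, mem_erase]
          rintro ⟨h1, h2, h3⟩
          rcases h1 with rfl | rfl | rfl
          exacts [hvA h3, hqA h3, h2 rfl]
        rw [this]; simp
      · intro u hu
        exfalso
        rw [mem_inter, hNx] at hu
        obtain ⟨hu1, hu2⟩ := hu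
        rw [mem_erase] at hu2
        simp only [mem_insert, mem_singleton] at hu1
        rcases hu1 with rfl | rfl | rfl
        · exact hvA hu2.2
        · exact hqA hu2.2
        · exact hu2.1 rfl
  · -- (B,B,B): A-side empty
    refine hmin.1 ⟨_, addA hA ?_ ?_⟩
    · have : G.neighborFinset x ∩ A = ∅ := by
        ext u
        simp only [mem_inter, hNx, mem_insert, mem_singleton, notMem_empty, iff_false]
        rintro ⟨h1, h2⟩
        rcases h1 with rfl | rfl | rfl
        exacts [hvA h2, hqA h2, hx'A h2]
      rw [this]; simp
    · intro u hu
      exfalso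
      rw [mem_inter, hNx] at hu
      obtain ⟨hu1, hu2⟩ := hu
      simp only [mem_insert, mem_singleton] at hu1
      rcases hu1 with rfl | rfl | rfl <;> [exact hvA hu2; exact hqA hu2; exact hx'A hu2]


end NoSixAux2

/-- Let `G` be a vertex-minimal graph without 4-cycles and 5-cycles having no
`(𝓕₃,𝓕₄)`-partition. Then no 6-vertex lies on three distinct 3-faces, one of which
is terrible. -/
theorem no_six_vertex_on_three_faces_one_terrible {V : Type*} [Fintype V] [DecidableEq V]
    (G : SimpleGraph V) [DecidableRel G.Adj]
    (h4 : ∀ (w : V) (c : G.Walk w w), c.IsCycle → c.length ≠ 4)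
    (h5 : ∀ (w : V) (c : G.Walk w w), c.IsCycle → c.length ≠ 5)
    (hmin : MinimalNoFF G) :
    ¬ ∃ v p₁ q₁ p₂ q₂ p₃ q₃ : V, G.degree v = 6 ∧
      (G.Adj v p₁ ∧ G.Adj v q₁ ∧ G.Adj p₁ q₁) ∧
      (G.Adj v p₂ ∧ G.Adj v q₂ ∧ G.Adj p₂ q₂) ∧
      (G.Adj v p₃ ∧ G.Adj v q₃ ∧ G.Adj p₃ q₃) ∧
      ({p₁, q₁} : Finset V) ≠ {p₂, q₂} ∧
      ({p₁, q₁} : Finset V) ≠ {p₃, q₃} ∧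
      ({p₂, q₂} : Finset V) ≠ {p₃, q₃} ∧
      Terrible G v p₁ q₁ := by
  rintro ⟨v, p₁, q₁, p₂, q₂, p₃, q₃, hdeg, ⟨h1a, h1b, h1c⟩, ⟨h2a, h2b, h2c⟩,
    ⟨h3a, h3b, h3c⟩, hne12, hne13, hne23, hT⟩
  obtain ⟨-, -, -, hd1, hd2, x', y', hxx', hx'v, hx'q, hyy', hy'v, hy'p, hor⟩ := hT
  obtain ⟨d12a, d12b, d12c, d12d⟩ :=
    NoSixAux.triangle_pair h4 h1a h1b h1c h2a h2b h2c hne12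
  obtain ⟨d13a, d13b, d13c, d13d⟩ :=
    NoSixAux.triangle_pair h4 h1a h1b h1c h3a h3b h3c hne13
  obtain ⟨d23a, d23b, d23c, d23d⟩ :=
    NoSixAux.triangle_pair h4 h2a h2b h2c h3a h3b h3c hne23
  have n1 : p₁ ≠ q₁ := h1c.ne
  have n2 : p₂ ≠ q₂ := h2c.ne
  have n3 : p₃ ≠ q₃ := h3c.ne
  have hNv : G.neighborFinset v = {p₁, q₁, p₂, q₂, p₃, q₃} := by
    refine (Finset.eq_of_subset_of_card_le ?_ ?_).symm
    · intro u hu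
      simp only [Finset.mem_insert, Finset.mem_singleton] at hu
      rw [mem_neighborFinset]
      rcases hu with rfl | rfl | rfl | rfl | rfl | rfl
      exacts [h1a, h1b, h2a, h2b, h3a, h3b]
    · rw [card_neighborFinset_eq_degree, hdeg]
      rw [Finset.card_insert_of_notMem (by simp [n1, d12a, d12b, d13a, d13b]),
        Finset.card_insert_of_notMem (by simp [d12c, d12d, d13c, d13d]),
        Finset.card_insert_of_notMem (by simp [n2, d23a, d23b]),
        Finset.card_insert_of_notMem (by simp [d23c, d23d]),
        Finset.card_insert_of_notMem (by simp [n3]), Finset.card_singleton]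
  have hNp : G.neighborFinset p₁ = {v, q₁, x'} := by
    refine (Finset.eq_of_subset_of_card_le ?_ ?_).symm
    · intro u hu
      simp only [Finset.mem_insert, Finset.mem_singleton] at hu
      rw [mem_neighborFinset]
      rcases hu with rfl | rfl | rfl
      exacts [h1a.symm, h1c, hxx']
    · rw [card_neighborFinset_eq_degree, hd1]
      rw [Finset.card_insert_of_notMem
          (by simp [h1b.ne, Ne.symm hx'v]),
        Finset.card_insert_of_notMem (by simp [Ne.symm hx'q]),
        Finset.card_singleton]
  have hNq : G.neighborFinset q₁ = {v, p₁, y'} := by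
    refine (Finset.eq_of_subset_of_card_le ?_ ?_).symm
    · intro u hu
      simp only [Finset.mem_insert, Finset.mem_singleton] at hu
      rw [mem_neighborFinset]
      rcases hu with rfl | rfl | rfl
      exacts [h1b.symm, h1c.symm, hyy']
    · rw [card_neighborFinset_eq_degree, hd2]
      rw [Finset.card_insert_of_notMem
          (by simp [h1a.ne, Ne.symm hy'v]),
        Finset.card_insert_of_notMem (by simp [Ne.symm hy'p]),
        Finset.card_singleton]
  rcases hor with h | h
  · exact key hmin hNp hNq hNv h h2c h3c
  · have hNv' : G.neighborFinset v = {q₁, p₁, p₂, q₂, p₃, q₃} := by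
      rw [hNv, Finset.insert_comm]
    exact key hmin hNq hNp hNv' h h2c h3c
end

section
/- In a vertex-minimal graph G with no (F_3,F_4)-partition, every 2-vertex lying on a triangle has its two neighbors of degrees at least 5 and at least 6 respectively (up to swapping): it cannot be that both neighbors on the triangle have degree at most 5. -/
open SimpleGraph Finset

lemma walk_lift {V : Type*} {H : SimpleGraph V} {s : Set V} {u v : V} (p : H.Walk u v) :
    ∀ (hp : ∀ w ∈ p.support, w ∈ s) (hu : u ∈ s) (hv : v ∈ s),
      ∃ q : (H.induce s).Walk ⟨u, hu⟩ ⟨v, hv⟩,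
        q.map (SimpleGraph.Embedding.induce s).toHom = p := by
  induction p with
  | nil => intro _ hu _; exact ⟨SimpleGraph.Walk.nil, rfl⟩
  | @cons u b v h p ih =>
    intro hp hu hv
    have hb : b ∈ s := hp b (by simp)
    obtain ⟨q, hq⟩ := ih (fun w hw => hp w (by simp [hw])) hb hv
    exact ⟨SimpleGraph.Walk.cons (by simpa using h) q, by simp [hq]⟩

lemma cycle_two_neighbors {V : Type*} {G : SimpleGraph V} {x : V} (d : G.Walk x x)
    (hd : d.IsCycle) :
    ∃ a b, G.Adj x a ∧ G.Adj x b ∧ a ≠ b ∧ a ∈ d.support ∧ b ∈ d.support := by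
  cases d with
  | nil => exact absurd hd (SimpleGraph.Walk.IsCycle.not_of_nil)
  | @cons _ b _ hadj q =>
    rw [SimpleGraph.Walk.cons_isCycle_iff] at hd
    obtain ⟨a, hadj2, q2, hq2⟩ :=
      SimpleGraph.Walk.exists_eq_cons_of_ne (hadj.ne) q.reverse
    refine ⟨b, a, hadj, hadj2, ?_, by simp, ?_⟩
    · intro h
      apply hd.2
      have h1 : s(x, a) ∈ q.reverse.edges := by rw [hq2]; simp
      rw [SimpleGraph.Walk.edges_reverse, List.mem_reverse] at h1
      rw [show (s(x, b) : Sym2 V) = s(x, a) by rw [h]]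
      exact h1
    · have : a ∈ q.reverse.support := by rw [hq2]; simp
      rw [SimpleGraph.Walk.support_reverse] at this
      simp [List.mem_reverse.mp this]

lemma acyclic_insert {V : Type*} [DecidableEq V] {G : SimpleGraph V} {s : Set V} {x : V}
    (hone : ∀ a ∈ s, ∀ b ∈ s, G.Adj x a → G.Adj x b → a = b)
    (hac : (G.induce s).IsAcyclic) : (G.induce (insert x s)).IsAcyclic := by
  intro v c hc
  let f : G.induce (insert x s) →g G :=
    (SimpleGraph.Embedding.induce (insert x s)).toHom
  have hinj : Function.Injective (f : ↑(insert x s) → V) := Subtype.val_injective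
  have hc' : (c.map f).IsCycle := hc.map hinj
  set c' := c.map f with hc'def
  have hsupp : ∀ w ∈ c'.support, w ∈ insert x s := by
    intro w hw
    rw [hc'def, SimpleGraph.Walk.support_map] at hw
    obtain ⟨w', _, rfl⟩ := List.mem_map.mp hw
    exact w'.2
  by_cases hxs : x ∈ c'.support
  · have hmem : ∀ w, w ∈ (c'.rotate x hxs).support → w ≠ x → w ∈ s := by
      intro w hw hwx
      have h1 : w ∈ (c'.rotate x hxs).support.tail := by
        rcases (SimpleGraph.Walk.mem_support_iff _).mp hw with h | h
        · exact absurd h hwx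
        · exact h
      have h2 : w ∈ c'.support.tail :=
        ((SimpleGraph.Walk.support_rotate c' x hxs).mem_iff).mp h1
      rcases hsupp w (List.mem_of_mem_tail h2) with rfl | h
      · exact absurd rfl hwx
      · exact h
    obtain ⟨a, b, ha, hb, hab, hma, hmb⟩ := cycle_two_neighbors _ (hc'.rotate hxs)
    exact hab (hone a (hmem a hma ha.ne') b (hmem b hmb hb.ne') ha hb)
  · have hs : ∀ w ∈ c'.support, w ∈ s := by
      intro w hw
      rcases hsupp w hw with rfl | h
      · exact absurd hw hxs
      · exact h
    obtain ⟨q, hq⟩ := walk_lift c' hs (hs _ c'.start_mem_support) (hs _ c'.end_mem_support)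
    have hq' : q.IsCycle :=
      (SimpleGraph.Walk.map_isCycle_iff_of_injective Subtype.val_injective).mp (hq ▸ hc')
    exact hac q hq'

lemma ffpart_insert_left {V : Type*} [Fintype V] [DecidableEq V] (G : SimpleGraph V)
    [DecidableRel G.Adj] {x : V} {A : Finset V} (hA : FFPartOn G (Finset.univ \ {x}) A)
    (h1 : ∀ a ∈ A, ∀ b ∈ A, G.Adj x a → G.Adj x b → a = b)
    (h2 : ∀ a ∈ A, G.Adj x a → (G.neighborFinset a ∩ A).card ≤ 2) :
    FFPartOn G Finset.univ (insert x A) := by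
  obtain ⟨hsub, h3, h4, hac3, hac4⟩ := hA
  have hxA : x ∉ A := fun h => by simpa using hsub h
  have hBeq : Finset.univ \ insert x A = (Finset.univ \ {x}) \ A := by
    ext v; simp [not_or, and_comm]
  refine ⟨Finset.subset_univ _, ?_, ?_, ?_, ?_⟩
  · intro v hv
    rcases Finset.mem_insert.mp hv with rfl | hvA
    · have he : G.neighborFinset v ∩ insert v A = G.neighborFinset v ∩ A :=
        Finset.inter_insert_of_notMem (G.notMem_neighborFinset_self v)
      rw [he]
      refine le_trans (Finset.card_le_one.mpr ?_) (by norm_num)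
      intro a ha b hb
      rw [Finset.mem_inter, mem_neighborFinset] at ha hb
      exact h1 a ha.2 b hb.2 ha.1 hb.1
    · by_cases hadj : G.Adj x v
      · have he : G.neighborFinset v ∩ insert x A = insert x (G.neighborFinset v ∩ A) :=
          Finset.inter_insert_of_mem ((mem_neighborFinset _ _ _).mpr hadj.symm)
        rw [he]
        exact le_trans (Finset.card_insert_le _ _)
          (by have := h2 v hvA hadj; omega)
      · have he : G.neighborFinset v ∩ insert x A = G.neighborFinset v ∩ A :=
          Finset.inter_insert_of_notMem
            (fun h => hadj (((mem_neighborFinset _ _ _).mp h).symm))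
        rw [he]; exact h3 v hvA
  · intro v hv
    rw [hBeq] at hv ⊢
    exact h4 v hv
  · rw [Finset.coe_insert]
    refine acyclic_insert ?_ hac3
    intro a ha b hb hxa hxb
    exact h1 a (by simpa using ha) b (by simpa using hb) hxa hxb
  · rw [hBeq]; exact hac4

lemma ffpart_keep {V : Type*} [Fintype V] [DecidableEq V] (G : SimpleGraph V)
    [DecidableRel G.Adj] {x : V} {A : Finset V} (hA : FFPartOn G (Finset.univ \ {x}) A)
    (h1 : ∀ a ∈ (Finset.univ \ {x}) \ A, ∀ b ∈ (Finset.univ \ {x}) \ A,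
      G.Adj x a → G.Adj x b → a = b)
    (h2 : ∀ a ∈ (Finset.univ \ {x}) \ A, G.Adj x a →
      (G.neighborFinset a ∩ ((Finset.univ \ {x}) \ A)).card ≤ 3) :
    FFPartOn G Finset.univ A := by
  obtain ⟨hsub, h3, h4, hac3, hac4⟩ := hA
  have hxA : x ∉ A := fun h => by simpa using hsub h
  have hBeq : (Finset.univ : Finset V) \ A = insert x ((Finset.univ \ {x}) \ A) := by
    ext v
    by_cases hv : v = x <;> simp [hv, hxA]
  refine ⟨Finset.subset_univ _, h3, ?_, hac3, ?_⟩
  · intro v hv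
    rw [hBeq] at hv ⊢
    rcases Finset.mem_insert.mp hv with rfl | hvB
    · have he : G.neighborFinset v ∩ insert v ((Finset.univ \ {v}) \ A)
          = G.neighborFinset v ∩ ((Finset.univ \ {v}) \ A) :=
        Finset.inter_insert_of_notMem (G.notMem_neighborFinset_self v)
      rw [he]
      refine le_trans (Finset.card_le_one.mpr ?_) (by norm_num)
      intro a ha b hb
      rw [Finset.mem_inter, mem_neighborFinset] at ha hb
      exact h1 a ha.2 b hb.2 ha.1 hb.1
    · by_cases hadj : G.Adj x v
      · have he : G.neighborFinset v ∩ insert x ((Finset.univ \ {x}) \ A)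
            = insert x (G.neighborFinset v ∩ ((Finset.univ \ {x}) \ A)) :=
          Finset.inter_insert_of_mem ((mem_neighborFinset _ _ _).mpr hadj.symm)
        rw [he]
        exact le_trans (Finset.card_insert_le _ _)
          (by have := h2 v hvB hadj; omega)
      · have he : G.neighborFinset v ∩ insert x ((Finset.univ \ {x}) \ A)
            = G.neighborFinset v ∩ ((Finset.univ \ {x}) \ A) :=
          Finset.inter_insert_of_notMem
            (fun h => hadj (((mem_neighborFinset _ _ _).mp h).symm))
        rw [he]; exact h4 v hvB
  · rw [hBeq, Finset.coe_insert]
    refine acyclic_insert ?_ hac4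
    intro a ha b hb hxa hxb
    exact h1 a (by simpa using ha) b (by simpa using hb) hxa hxb

lemma mixed_case {V : Type*} [Fintype V] [DecidableEq V] (G : SimpleGraph V)
    [DecidableRel G.Adj] (hno : ¬ ∃ A : Finset V, FFPartOn G Finset.univ A)
    {x y z : V} (hxy : G.Adj x y) (hyz : G.Adj y z) (hxz : G.Adj x z)
    (hadjx : ∀ w, G.Adj x w → w = y ∨ w = z)
    {A : Finset V} (hA : FFPartOn G (Finset.univ \ {x}) A)
    (hyA : y ∈ A) (hzA : z ∉ A) :
    5 ≤ G.degree y ∧ 6 ≤ G.degree z := by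
  have hxA : x ∉ A := fun h => by simpa using hA.1 h
  have hzB : z ∈ (Finset.univ \ {x}) \ A := by
    rw [Finset.mem_sdiff]
    exact ⟨by simp [hxz.ne'], hzA⟩
  have hsat3 : 3 ≤ (G.neighborFinset y ∩ A).card := by
    by_contra hlt
    push_neg at hlt
    refine hno ⟨insert x A, ffpart_insert_left G hA ?_ ?_⟩
    · intro a ha b hb hxa hxb
      rcases hadjx a hxa with rfl | rfl
      · rcases hadjx b hxb with rfl | rfl
        · rfl
        · exact absurd hb hzA
      · exact absurd ha hzA
    · intro a ha hxa
      rcases hadjx a hxa with rfl | rfl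
      · omega
      · exact absurd ha hzA
  have hsat4 : 4 ≤ (G.neighborFinset z ∩ ((Finset.univ \ {x}) \ A)).card := by
    by_contra hlt
    push_neg at hlt
    refine hno ⟨A, ffpart_keep G hA ?_ ?_⟩
    · intro a ha b hb hxa hxb
      rcases hadjx a hxa with rfl | rfl
      · exact absurd hyA (Finset.mem_sdiff.mp ha).2
      · rcases hadjx b hxb with rfl | rfl
        · exact absurd hyA (Finset.mem_sdiff.mp hb).2
        · rfl
    · intro a ha hxa
      rcases hadjx a hxa with rfl | rfl
      · exact absurd hyA (Finset.mem_sdiff.mp ha).2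
      · omega
  constructor
  · have hsub : insert x (insert z (G.neighborFinset y ∩ A)) ⊆ G.neighborFinset y := by
      intro w hw
      rcases Finset.mem_insert.mp hw with rfl | hw
      · exact (G.mem_neighborFinset y w).mpr hxy.symm
      rcases Finset.mem_insert.mp hw with rfl | hw
      · exact (G.mem_neighborFinset y w).mpr hyz
      · exact (Finset.mem_inter.mp hw).1
    have hcard := Finset.card_le_card hsub
    rw [Finset.card_insert_of_notMem, Finset.card_insert_of_notMem] at hcard
    · rw [← G.card_neighborFinset_eq_degree]
      omega
    · intro h
      exact hzA (Finset.mem_inter.mp h).2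
    · intro h
      rcases Finset.mem_insert.mp h with rfl | h
      · exact hxz.ne rfl
      · exact hxA (Finset.mem_inter.mp h).2
  · have hsub : insert x (insert y (G.neighborFinset z ∩ ((Finset.univ \ {x}) \ A)))
        ⊆ G.neighborFinset z := by
      intro w hw
      rcases Finset.mem_insert.mp hw with rfl | hw
      · exact (G.mem_neighborFinset z w).mpr hxz.symm
      rcases Finset.mem_insert.mp hw with rfl | hw
      · exact (G.mem_neighborFinset z w).mpr hyz.symm
      · exact (Finset.mem_inter.mp hw).1
    have hcard := Finset.card_le_card hsub
    rw [Finset.card_insert_of_notMem, Finset.card_insert_of_notMem] at hcard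
    · rw [← G.card_neighborFinset_eq_degree]
      omega
    · intro h
      exact (Finset.mem_sdiff.mp (Finset.mem_inter.mp h).2).2 hyA
    · intro h
      rcases Finset.mem_insert.mp h with rfl | h
      · exact hxy.ne rfl
      · have := (Finset.mem_sdiff.mp (Finset.mem_inter.mp h).2).1
        simp at this


/-- In a vertex-minimal graph with no `(𝓕₃,𝓕₄)`-partition, a 2-vertex on a triangle
has its two other triangle vertices of degrees at least 5 and at least 6 (up to
swapping); in particular they cannot both have degree at most 5. -/
theorem triangle_two_vertex_neighbors {V : Type*} [Fintype V] [DecidableEq V]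
    (G : SimpleGraph V) [DecidableRel G.Adj] (hmin : MinimalNoFF G)
    (x y z : V) (hxy : G.Adj x y) (hyz : G.Adj y z) (hzx : G.Adj z x)
    (hx : G.degree x = 2) :
    5 ≤ G.degree y ∧ 5 ≤ G.degree z ∧ (6 ≤ G.degree y ∨ 6 ≤ G.degree z) := by
  obtain ⟨hno, hdel⟩ := hmin
  obtain ⟨A, hA⟩ := hdel x
  have hnx : G.neighborFinset x = {y, z} := by
    symm
    apply Finset.eq_of_subset_of_card_le
    · intro w hw
      rcases Finset.mem_insert.mp hw with rfl | hw
      · exact (G.mem_neighborFinset x w).mpr hxy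
      · rw [Finset.mem_singleton] at hw
        subst hw
        exact (G.mem_neighborFinset x w).mpr hzx.symm
    · rw [G.card_neighborFinset_eq_degree, hx,
        Finset.card_insert_of_notMem (by simpa using hyz.ne), Finset.card_singleton]
  have hadjx : ∀ w, G.Adj x w → w = y ∨ w = z := by
    intro w hw
    have : w ∈ G.neighborFinset x := (G.mem_neighborFinset x w).mpr hw
    rw [hnx] at this
    simpa using this
  by_cases hyA : y ∈ A <;> by_cases hzA : z ∈ A
  · exfalso
    refine hno ⟨A, ffpart_keep G hA ?_ ?_⟩
    · intro a ha b hb hxa hxb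
      rcases hadjx a hxa with rfl | rfl
      · exact absurd hyA (Finset.mem_sdiff.mp ha).2
      · exact absurd hzA (Finset.mem_sdiff.mp ha).2
    · intro a ha hxa
      rcases hadjx a hxa with rfl | rfl
      · exact absurd hyA (Finset.mem_sdiff.mp ha).2
      · exact absurd hzA (Finset.mem_sdiff.mp ha).2
  · obtain ⟨h5y, h6z⟩ := mixed_case G hno hxy hyz hzx.symm hadjx hA hyA hzA
    exact ⟨h5y, by omega, Or.inr h6z⟩
  · obtain ⟨h5z, h6y⟩ := mixed_case G hno hzx.symm hyz.symm hxy
      (fun w hw => (hadjx w hw).symm) hA hzA hyA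
    exact ⟨by omega, h5z, Or.inl h6y⟩
  · exfalso
    refine hno ⟨insert x A, ffpart_insert_left G hA ?_ ?_⟩
    · intro a ha b hb hxa hxb
      rcases hadjx a hxa with rfl | rfl
      · exact absurd ha hyA
      · exact absurd ha hzA
    · intro a ha hxa
      rcases hadjx a hxa with rfl | rfl
      · exact absurd ha hyA
      · exact absurd ha hzA
end

section
/- Let G be a plane graph without 4-cycles and 5-cycles in which every 2-vertex has both neighbors of degree at least 5 (so in particular any 3-face contains at most one 2-vertex, and a 2-vertex not on a 3-face lies on two faces of length at least 7 through it). Then no 7⁺-face f is incident with more than deg(f) − 6 two-vertices that lie on 3-faces; equivalently, a face of length ℓ ≥ 7 incident with ℓ − 5 such 2-vertices would force a cycle of length 5 in G, a contradiction. -/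
open Finset SimpleGraph

private lemma edge_endpoints_not_mem' {V : Type*} {G : SimpleGraph V} {b a : V}
    (q : G.Walk b a) (hq : q.IsPath) (hlen : 2 ≤ q.length) : s(a, b) ∉ q.edges := by
  intro he
  cases q with
  | nil => simp at hlen
  | @cons _ c _ h r =>
    rw [Walk.cons_isPath_iff] at hq
    rw [Walk.edges_cons, List.mem_cons] at he
    rcases he with he | he
    · rw [Sym2.eq_iff] at he
      rcases he with ⟨h1, h2⟩ | ⟨h1, _⟩
      · subst h1; subst h2; exact G.loopless.irrefl _ h
      · subst h1
        have := (Walk.isPath_iff_eq_nil (p := r)).mp hq.1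
        subst this
        simp [Walk.length_cons] at hlen
    · exact hq.2 (Walk.snd_mem_support_of_mem_edges r he)

private lemma mem_tail_of_closed' {V : Type*} {G : SimpleGraph V} {w : V}
    (d : G.Walk w w) (hd : 0 < d.length) {z : V} (hz : z ∈ d.support) :
    z ∈ d.support.tail := by
  cases d with
  | nil => simp at hd
  | cons h r =>
    rw [Walk.support_cons] at hz ⊢
    rw [List.tail_cons]
    rcases List.mem_cons.mp hz with rfl | h'
    · exact r.end_mem_support
    · exact h'

private lemma aux_main {V : Type*} [Fintype V] [DecidableEq V]
    (G : SimpleGraph V) [DecidableRel G.Adj]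
    (h5 : ∀ (w : V) (c : G.Walk w w), c.IsCycle → c.length ≠ 5)
    (_h2 : ∀ x y : V, G.degree x = 2 → G.Adj x y → 5 ≤ G.degree y) :
    ∀ (n : ℕ) (u : V) (c : G.Walk u u), c.IsCycle → c.length = n → 6 ≤ n →
    (c.support.toFinset.filter fun x => G.degree x = 2 ∧
        ∃ a b : V, G.Adj x a ∧ G.Adj x b ∧ G.Adj a b).card ≤ n - 6 := by
  intro n
  induction n using Nat.strong_induction_on with
  | _ n ih =>
    intro u c hc hlen hn
    by_contra hcon
    push_neg at hcon
    have hne : (c.support.toFinset.filter fun x => G.degree x = 2 ∧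
        ∃ a b : V, G.Adj x a ∧ G.Adj x b ∧ G.Adj a b).Nonempty :=
      Finset.card_pos.mp (by omega)
    obtain ⟨x, hxS⟩ := hne
    rw [Finset.mem_filter] at hxS
    obtain ⟨hxsup, hdeg, a', b', ha', hb', hab'⟩ := hxS
    have hx : x ∈ c.support := List.mem_toFinset.mp hxsup
    set c₁ := c.rotate x hx with hc₁def
    have hc₁ : c₁.IsCycle := hc.rotate hx
    have hlen₁ : c₁.length = n := by
      have h1 : c₁.darts.length = c.darts.length := (Walk.rotate_darts c x hx).perm.length_eq
      rwa [Walk.length_darts, Walk.length_darts, hlen] at h1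
    -- membership transfer into c₁
    have hsup : ∀ y, y ∈ c.support → y ∈ c₁.support := by
      intro y hy
      have h1 : y ∈ c.support.tail := mem_tail_of_closed' c (by omega) hy
      have h2' : y ∈ c₁.support.tail := (Walk.support_rotate c x hx).mem_iff.mpr h1
      exact List.mem_of_mem_tail h2'
    -- destructure c₁
    obtain ⟨a, h₁, p, hp⟩ := Walk.not_nil_iff.mp hc₁.not_nil
    rw [hp] at hc₁ hlen₁
    rw [Walk.length_cons] at hlen₁
    rw [Walk.cons_isCycle_iff] at hc₁
    obtain ⟨hpPath, -⟩ := hc₁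
    -- destructure p.reverse
    have hpnn : ¬ p.reverse.Nil := by
      rw [Walk.not_nil_iff_lt_length, Walk.length_reverse]; omega
    obtain ⟨b, h₂, q, hq⟩ := Walk.not_nil_iff.mp hpnn
    have hqlen : q.length + 2 = n := by
      have := Walk.length_reverse p
      rw [hq, Walk.length_cons] at this
      omega
    have hqpath : q.IsPath := by
      have := hpPath.reverse
      rw [hq, Walk.cons_isPath_iff] at this
      exact this.1
    have hne_ab : a ≠ b := by
      rintro rfl
      have := (Walk.isPath_iff_eq_nil (p := q)).mp hqpath
      subst this
      simp at hqlen
      omega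
    -- the two neighbours of x are a and b, hence G.Adj a b
    have hab : G.Adj a b := by
      have hsub : ({a, b} : Finset V) ⊆ G.neighborFinset x := by
        intro y hy
        rw [Finset.mem_insert, Finset.mem_singleton] at hy
        rw [mem_neighborFinset]
        rcases hy with rfl | rfl
        · exact h₁
        · exact h₂
      have hcard : (G.neighborFinset x).card ≤ ({a, b} : Finset V).card := by
        rw [G.card_neighborFinset_eq_degree, hdeg,
          Finset.card_insert_of_notMem (by simp [hne_ab]), Finset.card_singleton]
      have heq : G.neighborFinset x = {a, b} :=
        (Finset.eq_of_subset_of_card_le hsub hcard).symm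
      have ha'm : a' ∈ ({a, b} : Finset V) := heq ▸ (G.mem_neighborFinset x a').mpr ha'
      have hb'm : b' ∈ ({a, b} : Finset V) := heq ▸ (G.mem_neighborFinset x b').mpr hb'
      rw [Finset.mem_insert, Finset.mem_singleton] at ha'm hb'm
      have hne' : a' ≠ b' := hab'.ne
      rcases ha'm with rfl | rfl <;> rcases hb'm with rfl | rfl
      · exact absurd rfl hne'
      · exact hab'
      · exact hab'.symm
      · exact absurd rfl hne'
    -- the shortcut cycle
    set w : G.Walk a a := Walk.cons hab q with hwdef
    have hw : w.IsCycle := by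
      rw [hwdef, Walk.cons_isCycle_iff]
      exact ⟨hqpath, edge_endpoints_not_mem' q hqpath (by omega)⟩
    have hwlen : w.length = n - 1 := by
      rw [hwdef, Walk.length_cons]; omega
    -- support transfer into w
    have hsupw : ∀ y, y ∈ c.support → y ≠ x → y ∈ w.support := by
      intro y hy hyx
      have h1 : y ∈ c₁.support := hsup y hy
      rw [hp, Walk.support_cons] at h1
      rcases List.mem_cons.mp h1 with rfl | h1'
      · exact absurd rfl hyx
      · have h2' : y ∈ p.support.reverse := List.mem_reverse.mpr h1'
        rw [← Walk.support_reverse, hq, Walk.support_cons] at h2'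
        rcases List.mem_cons.mp h2' with rfl | h3
        · exact absurd rfl hyx
        · rw [hwdef, Walk.support_cons]
          exact List.mem_cons_of_mem _ h3
    -- counting
    set S := (c.support.toFinset.filter fun x => G.degree x = 2 ∧
        ∃ a b : V, G.Adj x a ∧ G.Adj x b ∧ G.Adj a b) with hSdef
    set T := (w.support.toFinset.filter fun x => G.degree x = 2 ∧
        ∃ a b : V, G.Adj x a ∧ G.Adj x b ∧ G.Adj a b) with hTdef
    have hST : S.erase x ⊆ T := by
      intro y hy
      rw [Finset.mem_erase] at hy
      obtain ⟨hyx, hyS⟩ := hy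
      rw [hSdef, Finset.mem_filter] at hyS
      rw [hTdef, Finset.mem_filter]
      exact ⟨List.mem_toFinset.mpr
        (hsupw y (List.mem_toFinset.mp hyS.1) hyx), hyS.2⟩
    have hxS' : x ∈ S := by
      rw [hSdef, Finset.mem_filter]
      exact ⟨hxsup, hdeg, a', b', ha', hb', hab'⟩
    have hcard1 : S.card ≤ T.card + 1 := by
      have h1 := Finset.card_erase_add_one hxS'
      have h2' := Finset.card_le_card hST
      omega
    by_cases hn6 : n = 6
    · exact h5 a w hw (by omega)
    · have hT := ih (n - 1) (by omega) a w hw hwlen (by omega)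
      rw [← hTdef] at hT
      omega

/-- Let `G` be a graph without 4-cycles and 5-cycles in which both neighbors of every
2-vertex have degree at least 5. Then a cycle (facial walk of a face) of length
`ℓ ≥ 7` passes through at most `ℓ − 6` vertices of degree 2 that lie on a triangle
(i.e. on a 3-face): `ℓ − 5` such vertices would force a 5-cycle. -/
theorem long_face_few_bad_two_vertices {V : Type*} [Fintype V] [DecidableEq V]
    (G : SimpleGraph V) [DecidableRel G.Adj]
    (h4 : ∀ (w : V) (c : G.Walk w w), c.IsCycle → c.length ≠ 4)
    (h5 : ∀ (w : V) (c : G.Walk w w), c.IsCycle → c.length ≠ 5)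
    (h2 : ∀ x y : V, G.degree x = 2 → G.Adj x y → 5 ≤ G.degree y)
    (u : V) (c : G.Walk u u) (hc : c.IsCycle) (hl : 7 ≤ c.length) :
    (c.support.toFinset.filter fun x => G.degree x = 2 ∧
        ∃ a b : V, G.Adj x a ∧ G.Adj x b ∧ G.Adj a b).card ≤ c.length - 6 :=
  aux_main G h5 h2 c.length u c hc rfl (by omega)
end
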